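/- Let 0 < q < 1/6 and let x = (3, 2, 3q, 2q, 3q², 2q², …) be the multigeometric sequence (3,2; q). Then the series ∑_{n} x_n is fast convergent, and its achievement set satisfies E(x) = (5/(1−q))·C(a), where a = (a_n) is the 2-periodic sequence given by a_{2n−1} = (1−6q)/5 and a_{2n} = (2−7q)/(2+3q) for all n ∈ ℕ. -/

import Mathlib

open Pointwise MeasureTheory

namespace CCS

/-- `dSeq a n` is the common length `d_n = ∏_{i=1}^n (1 - a_i)/2` of the intervals of the
`n`-th step of the construction of the central Cantor set `C(a)` (`d_0 = 1`).
The sequence `a` is indexed from `1`; the value `a 0` is irrelevant. -/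
noncomputable def dSeq (a : ℕ → ℝ) (n : ℕ) : ℝ :=
  ∏ i ∈ Finset.Icc 1 n, ((1 - a i) / 2)

/-- Left endpoint of the interval `I_t`, `t ∈ {0,1}^n` (coded as a list, the paper's
`t_j` being `t.getD (j-1) 0`): `l(I_t) = ∑_{j=1}^n t_j (d_{j-1} - d_j)`. -/
noncomputable def Il (a : ℕ → ℝ) (t : List ℕ) : ℝ :=
  ∑ j ∈ Finset.range t.length, (t.getD j 0 : ℝ) * (dSeq a j - dSeq a (j + 1))

/-- The `n`-th step `C_n(a)` of the construction of the central Cantor set: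
the union of the intervals `I_t = [l(I_t), l(I_t) + d_n]` over `t ∈ {0,1}^n`. -/
noncomputable def cantorStep (a : ℕ → ℝ) (n : ℕ) : Set ℝ :=
  ⋃ t ∈ {t : List ℕ | t.length = n ∧ ∀ j ∈ t, j ≤ 1},
    Set.Icc (Il a t) (Il a t + dSeq a n)

/-- The central Cantor set `C(a) = ⋂ₙ C_n(a)`. -/
noncomputable def cantorSet (a : ℕ → ℝ) : Set ℝ := ⋂ n, cantorStep a n

/-- Left endpoint of the interval `J_s = I_t - I_p`, for `s ∈ {0,1,2}^n`:
`l(J_s) = -1 + ∑_{j=1}^n s_j (d_{j-1} - d_j)`. -/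
noncomputable def Jl (a : ℕ → ℝ) (s : List ℕ) : ℝ :=
  -1 + ∑ j ∈ Finset.range s.length, (s.getD j 0 : ℝ) * (dSeq a j - dSeq a (j + 1))

/-- Right endpoint of `J_s`: `r(J_s) = l(J_s) + 2 d_n`. -/
noncomputable def Jr (a : ℕ → ℝ) (s : List ℕ) : ℝ :=
  Jl a s + 2 * dSeq a s.length

/-- The interval `J_s`. -/
noncomputable def Jset (a : ℕ → ℝ) (s : List ℕ) : Set ℝ := Set.Icc (Jl a s) (Jr a s)

/-- Left endpoint of the gap `G^i_s` (`i = 0`: left gap, `i = 1`: right gap) of `J_s`. -/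
noncomputable def Gl (a : ℕ → ℝ) (i : ℕ) (s : List ℕ) : ℝ :=
  Jl a s + (i : ℝ) * (dSeq a s.length - dSeq a (s.length + 1)) + 2 * dSeq a (s.length + 1)

/-- Right endpoint of the gap `G^i_s`. -/
noncomputable def Gr (a : ℕ → ℝ) (i : ℕ) (s : List ℕ) : ℝ :=
  Jl a s + ((i : ℝ) + 1) * (dSeq a s.length - dSeq a (s.length + 1))

/-- The gap `G^i_s ⊆ J_s`, an open interval. -/
noncomputable def Gset (a : ℕ → ℝ) (i : ℕ) (s : List ℕ) : Set ℝ :=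
  Set.Ioo (Gl a i s) (Gr a i s)

/-- `N(0,s) = max {j : s_j > 0}`, `N(1,s) = max {j : s_j < 2}` (1-based, `max ∅ = 0`). -/
noncomputable def Nidx (i : ℕ) (s : List ℕ) : ℕ :=
  sSup {j | 1 ≤ j ∧ j ≤ s.length ∧
    (if i = 0 then 0 < s.getD (j - 1) 0 else s.getD (j - 1) 0 < 2)}

/-- The family `𝒢^{i0}_{s0}(n)` of (indices of) gaps of rank `n`, for
`s0 ∈ {0,1,2}^{k_m - 1}`; a gap `G^i_s` is coded by the pair `(i, s)`.
`𝒢^{i0}_{s0}(m) = {G^{i0}_{s0}}` and for `n > m`,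
`𝒢^{i0}_{s0}(n)` consists of the gap `Ḡ^{i0}_{s0}(n)` together with the gaps
`Ḡ^1_{t^j}(n)`, `Ḡ^0_{t^(j+1)}(n)` for all `G^j_t ∈ 𝒢^{i0}_{s0}(l)`, `m ≤ l < n`. -/
def gapFamily (k : ℕ → ℕ) (i0 : ℕ) (s0 : List ℕ) (m : ℕ) (n : ℕ) : Set (ℕ × List ℕ) :=
  if n ≤ m then {(i0, s0)}
  else
    {(i0, s0 ++ List.replicate (k n - k m) (2 * i0))} ∪
      ⋃ (l : ℕ) (_ : m ≤ l) (hl : l < n),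
        ⋃ p ∈ gapFamily k i0 s0 m l,
          ({(1, p.2 ++ p.1 :: List.replicate (k n - k l - 1) 2),
            (0, p.2 ++ (p.1 + 1) :: List.replicate (k n - k l - 1) 0)} : Set (ℕ × List ℕ))
termination_by n
decreasing_by exact hl

/-- The family `𝒢^{i0}_{s0} = ⋃_{n ≥ m} 𝒢^{i0}_{s0}(n)`. -/
def gapFamilyAll (k : ℕ → ℕ) (i0 : ℕ) (s0 : List ℕ) (m : ℕ) : Set (ℕ × List ℕ) :=
  ⋃ (n : ℕ) (_ : m ≤ n), gapFamily k i0 s0 m n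

/-- The family `𝒢_t := 𝒢^0_{t ++ 0^{(k_m - |t| - 1)}} ∪ 𝒢^1_{t ++ 2^{(k_m - |t| - 1)}}`
for `t ∈ {0,1,2}^k` with `k_{m-1} ≤ k < k_m`. -/
def gapFamilyT (k : ℕ → ℕ) (m : ℕ) (t : List ℕ) : Set (ℕ × List ℕ) :=
  gapFamilyAll k 0 (t ++ List.replicate (k m - t.length - 1) 0) m ∪
    gapFamilyAll k 1 (t ++ List.replicate (k m - t.length - 1) 2) m

/-- The union `⋃ 𝒢` of a family of (indices of) gaps, as a subset of `ℝ`. -/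
noncomputable def gapUnion (a : ℕ → ℝ) (G : Set (ℕ × List ℕ)) : Set ℝ :=
  ⋃ p ∈ G, Gset a p.1 p.2

/-- `padSeq k c s m n` is the index of the gap `G^i(s,n)` (for `c = 2i`):
`s ++ c^{(k_m - |s| - 1)} ++ 1 ++ c^{(k_{m+1} - k_m - 1)} ++ 1 ++ ⋯ ++ 1 ++ c^{(k_n - k_{n-1} - 1)}`. -/
def padSeq (k : ℕ → ℕ) (c : ℕ) (s : List ℕ) (m : ℕ) : ℕ → List ℕ
  | 0 => s ++ List.replicate (k m - s.length - 1) c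
  | n + 1 =>
    if n + 1 ≤ m then s ++ List.replicate (k m - s.length - 1) c
    else padSeq k c s m n ++ 1 :: List.replicate (k (n + 1) - k n - 1) c

/-- `δ_n := min {3d_i - d_{i-1} : k_{n-1} + 1 ≤ i ≤ k_n - 1}` (as an element of `EReal`,
so that `min ∅ = ⊤ = ∞`). -/
noncomputable def deltaMin (a : ℕ → ℝ) (k : ℕ → ℕ) (n : ℕ) : EReal :=
  sInf ((fun i => ((3 * dSeq a i - dSeq a (i - 1) : ℝ) : EReal)) ''
    (Set.Icc (k (n - 1) + 1) (k n - 1)))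

/-- `Δ_n := max {3d_i - d_{i-1} : k_{n-1} + 1 ≤ i ≤ k_n - 1}` (`max ∅ = ⊥ = -∞`). -/
noncomputable def deltaMax (a : ℕ → ℝ) (k : ℕ → ℕ) (n : ℕ) : EReal :=
  sSup ((fun i => ((3 * dSeq a i - dSeq a (i - 1) : ℝ) : EReal)) ''
    (Set.Icc (k (n - 1) + 1) (k n - 1)))

/-- `m_n := min { δ_n - (d_{k_n - 1} - d_{k_n}), 4 d_{k_n} - Δ_n }`. -/
noncomputable def mSeq (a : ℕ → ℝ) (k : ℕ → ℕ) (n : ℕ) : EReal :=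
  min (deltaMin a k n - ((dSeq a (k n - 1) - dSeq a (k n) : ℝ) : EReal))
    (((4 * dSeq a (k n) : ℝ) : EReal) - deltaMax a k n)

/-- `∑_{i=n+1}^∞ (d_{k_i - 1} - d_{k_i})`. -/
noncomputable def tailSum (a : ℕ → ℝ) (k : ℕ → ℕ) (n : ℕ) : ℝ :=
  ∑' i : ℕ, (dSeq a (k (n + 1 + i) - 1) - dSeq a (k (n + 1 + i)))

/-- Condition `(*)`: `m_n ≥ 2 ∑_{i=n+1}^∞ (d_{k_i - 1} - d_{k_i})` for every `n ∈ ℕ`. -/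
def condStar (a : ℕ → ℝ) (k : ℕ → ℕ) : Prop :=
  ∀ n : ℕ, 1 ≤ n → ((2 * tailSum a k n : ℝ) : EReal) ≤ mSeq a k n

/-- `(k_n)_{n ≥ 1}` is the increasing enumeration of all indices greater than `k 0 = k₀`
at which `a` exceeds `1/3`. -/
def IsGapEnum (a : ℕ → ℝ) (k : ℕ → ℕ) : Prop :=
  StrictMono k ∧ (∀ n, 1 ≤ n → k 0 < k n ∧ 1 / 3 < a (k n)) ∧
    (∀ j, k 0 < j → 1 / 3 < a j → ∃ n, 1 ≤ n ∧ k n = j)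

/-- `G` is a gap of `E`: a bounded connected component of `ℝ ∖ E`. -/
def IsGapOf (E G : Set ℝ) : Prop :=
  (∃ x ∉ E, G = connectedComponentIn Eᶜ x) ∧ Bornology.IsBounded G

/-- `C` is a proper (nontrivial) connected component of `E`. -/
def IsProperComponentOf (E C : Set ℝ) : Prop :=
  (∃ x ∈ E, C = connectedComponentIn E x) ∧ C.Nontrivial

/-- `E` is a Cantorval: a perfect set with infinitely many gaps such that both endpoints
of every gap are accumulated both by gaps and by proper components of `E`. -/
def IsCantorval (E : Set ℝ) : Prop :=
  Perfect E ∧ {G : Set ℝ | IsGapOf E G}.Infinite ∧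
    ∀ G, IsGapOf E G → ∀ p, p = sInf G ∨ p = sSup G →
      (∀ ε > 0, ∃ G', IsGapOf E G' ∧ G' ≠ G ∧ G' ⊆ Set.Ioo (p - ε) (p + ε)) ∧
      (∀ ε > 0, ∃ C, IsProperComponentOf E C ∧ C ⊆ Set.Ioo (p - ε) (p + ε))

/-- `J_s` and `J_u` (of length `k_m - 1`) are associated:
`N := N(0,s) = N(1,u) ∈ {k_{m-1}+1, …, k_m - 1}`, `s|(N-1) = u|(N-1)`, `u_N = s_N - 1`.
Then `J_u` is the interval covering `𝒢^0_s` and `J_s` is the interval covering `𝒢^1_u`. -/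
def Associated (k : ℕ → ℕ) (m : ℕ) (s u : List ℕ) : Prop :=
  s.length = k m - 1 ∧ u.length = k m - 1 ∧
    Nidx 0 s = Nidx 1 u ∧
    k (m - 1) + 1 ≤ Nidx 0 s ∧ Nidx 0 s ≤ k m - 1 ∧
    s.take (Nidx 0 s - 1) = u.take (Nidx 0 s - 1) ∧
    u.getD (Nidx 0 s - 1) 0 = s.getD (Nidx 0 s - 1) 0 - 1

/-- `G^i_g ⊂_* J_v`: the gap `G^i_g` is covered by the interval `J_v`, i.e. `G^i_g`
belongs to a family `𝒢^0_w` (resp. `𝒢^1_w`) such that `J_v` is the interval covering it. -/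
def CoversGap (k : ℕ → ℕ) (i : ℕ) (g : List ℕ) (v : List ℕ) : Prop :=
  ∃ m w, 1 ≤ m ∧
    ((Associated k m w v ∧ (i, g) ∈ gapFamilyAll k 0 w m) ∨
      (Associated k m v w ∧ (i, g) ∈ gapFamilyAll k 1 w m))

/-- The achievement set `E(x) = {∑_{j ∈ A} x_j : A ⊆ ℕ}` of a series (indexed from `1`). -/
def achievementSet (x : ℕ → ℝ) : Set ℝ :=
  {y | ∃ A : Set ℕ, A ⊆ {n | 1 ≤ n} ∧ HasSum (A.indicator x) y}

/-!
Choosing the right-hand interval at step `j + 1` of the construction shifts the left endpoint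
by `d_j - d_{j+1}`, so the left endpoints of the intervals of `C_n(a)` are the finite subsums of
`∑ (d_j - d_{j+1})`. An infinite subsum lies in the interval of `C_n(a)` fixed by its first `n`
choices, because its tail is at most `d_n`; conversely every point of `C(a)` is within `d_n` of
some subsum for every `n`, and the set of subsums is compact, being a continuous image of
`{0,1}^ℕ`. Hence `C(a) = E((d_{j-1} - d_j)_j)`, and this series is fast convergent once every
`a_j > 0`: the tail after `d_{j-1} - d_j` is `d_j = d_{j-1} (1 - a_j) / 2`.

For the given `a` one computes `d_{2l} = q^l` and `d_{2l+1} = (2 + 3q)/5 · q^l`, so that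
`x_{j+1} = 5/(1-q) · (d_j - d_{j+1})`.
-/

open Filter Topology

noncomputable def selectSum (y : ℕ → ℝ) (g : ℕ → Bool) : ℝ := ∑' j, {j | g j}.indicator y j

section SelectSum

variable {y : ℕ → ℝ}

lemma hasSum_selectSum (hy : Summable y) (g : ℕ → Bool) :
    HasSum (fun j => {j | g j}.indicator y j) (selectSum y g) :=
  (hy.indicator _).hasSum

lemma continuous_selectSum (hy : Summable y) : Continuous (selectSum y) := by
  refine continuous_tsum (fun j => ?_) hy.abs (fun j g => ?_)
  · simp only [Set.indicator_apply, Set.mem_ofPred_eq]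
    exact (continuous_of_discreteTopology (f := fun b : Bool => if b then y j else 0)).comp
      (continuous_apply j)
  · exact Real.norm_eq_abs (y j) ▸ norm_indicator_le_norm_self y j

lemma selectSum_const_mul (c : ℝ) (g : ℕ → Bool) :
    selectSum (fun j => c * y j) g = c * selectSum y g := by
  simp only [selectSum, Set.indicator_apply, ← tsum_mul_left, mul_ite, mul_zero]

lemma range_selectSum_const_mul (c : ℝ) :
    Set.range (selectSum fun j => c * y j) = c • Set.range (selectSum y) := by
  simp only [Set.smul_set_range, smul_eq_mul, ← selectSum_const_mul]

end SelectSum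

lemma achievementSet_eq_range_selectSum {x : ℕ → ℝ} (hx : Summable x) :
    achievementSet x = Set.range (selectSum fun j => x (j + 1)) := by
  classical
  ext s
  constructor
  · rintro ⟨A, hA, hs⟩
    have h0 : 0 ∉ A := fun h => by simpa using hA h
    have hshift := ((hasSum_nat_add_iff' 1).2 hs).tsum_eq
    refine ⟨fun j => decide (j + 1 ∈ A), ?_⟩
    simpa [selectSum, Set.indicator_apply, h0] using hshift
  · rintro ⟨g, rfl⟩
    refine ⟨{n | 1 ≤ n ∧ g (n - 1)}, fun n hn => hn.1, ?_⟩
    have hshift : HasSum (fun j => {n | 1 ≤ n ∧ g (n - 1)}.indicator x (j + 1))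
        (selectSum (fun j => x (j + 1)) g) := by
      convert hasSum_selectSum ((summable_nat_add_iff 1).2 hx) g using 2 with j
      simp [Set.indicator_apply]
    simpa using (hasSum_nat_add_iff 1).1 hshift

noncomputable def dSeqDiff (a : ℕ → ℝ) (j : ℕ) : ℝ := dSeq a j - dSeq a (j + 1)

def binaryPrefix (g : ℕ → Bool) (n : ℕ) : List ℕ :=
  (List.range n).map fun j => if g j then 1 else 0

section CentralCantorSet

variable {a : ℕ → ℝ}

lemma dSeq_succ (n : ℕ) : dSeq a (n + 1) = dSeq a n * ((1 - a (n + 1)) / 2) := by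
  rw [dSeq, dSeq, Finset.prod_Icc_succ_top (by omega)]

lemma dSeq_pos (ha : ∀ n, a n < 1) (n : ℕ) : 0 < dSeq a n :=
  Finset.prod_pos fun i _ => by linarith [ha i]

lemma dSeq_nonneg (ha : ∀ n, a n ≤ 1) (n : ℕ) : 0 ≤ dSeq a n :=
  Finset.prod_nonneg fun i _ => by linarith [ha i]

lemma two_mul_dSeq_succ_le (ha : ∀ n, a n ∈ Set.Icc 0 1) (n : ℕ) :
    2 * dSeq a (n + 1) ≤ dSeq a n := by
  rw [dSeq_succ]
  nlinarith [dSeq_nonneg (fun n => (ha n).2) n, (ha (n + 1)).1]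

lemma two_mul_dSeq_succ_lt (ha : ∀ n, a n ∈ Set.Ioo 0 1) (n : ℕ) :
    2 * dSeq a (n + 1) < dSeq a n := by
  rw [dSeq_succ]
  nlinarith [dSeq_pos (fun n => (ha n).2) n, (ha (n + 1)).1]

lemma dSeq_le_half_pow (ha : ∀ n, a n ∈ Set.Icc 0 1) (n : ℕ) : dSeq a n ≤ (1 / 2) ^ n := by
  induction n with
  | zero => simp [dSeq]
  | succ n ih => rw [pow_succ]; linarith [two_mul_dSeq_succ_le ha n]

lemma tendsto_dSeq (ha : ∀ n, a n ∈ Set.Icc 0 1) : Tendsto (dSeq a) atTop (𝓝 0) :=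
  squeeze_zero (dSeq_nonneg fun n => (ha n).2) (dSeq_le_half_pow ha)
    (tendsto_pow_atTop_nhds_zero_of_lt_one (by norm_num) (by norm_num))

lemma dSeqDiff_nonneg (ha : ∀ n, a n ∈ Set.Icc 0 1) (j : ℕ) : 0 ≤ dSeqDiff a j := by
  rw [dSeqDiff]
  linarith [two_mul_dSeq_succ_le ha j, dSeq_nonneg (fun n => (ha n).2) (j + 1)]

lemma hasSum_dSeqDiff (ha : ∀ n, a n ∈ Set.Icc 0 1) (n : ℕ) :
    HasSum (fun j => dSeqDiff a (j + n)) (dSeq a n) := by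
  rw [hasSum_iff_tendsto_nat_of_nonneg fun j => dSeqDiff_nonneg ha _]
  have htele : ∀ N, ∑ j ∈ Finset.range N, dSeqDiff a (j + n) = dSeq a n - dSeq a (N + n) := by
    intro N
    simpa [dSeqDiff, add_right_comm] using Finset.sum_range_sub' (fun j => dSeq a (j + n)) N
  simp only [htele]
  simpa using tendsto_const_nhds.sub ((tendsto_dSeq ha).comp (tendsto_add_atTop_nat n))

lemma summable_dSeqDiff (ha : ∀ n, a n ∈ Set.Icc 0 1) : Summable (dSeqDiff a) :=
  (hasSum_dSeqDiff ha 0).summable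

lemma Il_binaryPrefix (g : ℕ → Bool) (n : ℕ) :
    Il a (binaryPrefix g n) = ∑ j ∈ Finset.range n, {j | g j}.indicator (dSeqDiff a) j := by
  rw [Il, show (binaryPrefix g n).length = n by simp [binaryPrefix]]
  refine Finset.sum_congr rfl fun j hj => ?_
  have hj : j < n := Finset.mem_range.1 hj
  by_cases hg : g j <;> simp [binaryPrefix, hj, hg, dSeqDiff]

lemma binaryPrefix_getD_eq_one {t : List ℕ} (ht : ∀ j ∈ t, j ≤ 1) :
    binaryPrefix (fun j => t.getD j 0 = 1) t.length = t := by
  refine List.ext_getElem (by simp [binaryPrefix]) fun j _ hj => ?_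
  have := ht _ (List.getElem_mem hj)
  simp only [binaryPrefix, List.getElem_map, List.getElem_range, List.getD_eq_getElem _ _ hj,
    decide_eq_true_eq]
  split <;> omega

lemma mem_cantorStep_iff {n : ℕ} {z : ℝ} :
    z ∈ cantorStep a n ↔ ∃ g : ℕ → Bool,
      z ∈ Set.Icc (∑ j ∈ Finset.range n, {j | g j}.indicator (dSeqDiff a) j)
        (∑ j ∈ Finset.range n, {j | g j}.indicator (dSeqDiff a) j + dSeq a n) := by
  simp only [cantorStep, Set.mem_iUnion, exists_prop, Set.mem_ofPred_eq]
  constructor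
  · rintro ⟨t, ⟨rfl, ht⟩, hz⟩
    exact ⟨_, by rwa [← Il_binaryPrefix, binaryPrefix_getD_eq_one ht]⟩
  · rintro ⟨g, hz⟩
    refine ⟨binaryPrefix g n, ⟨by simp [binaryPrefix], ?_⟩, by rwa [Il_binaryPrefix]⟩
    simp only [binaryPrefix, List.mem_map]
    rintro _ ⟨j, -, rfl⟩
    split <;> omega

lemma selectSum_mem_Icc (ha : ∀ n, a n ∈ Set.Icc 0 1) (g : ℕ → Bool) (n : ℕ) :
    selectSum (dSeqDiff a) g ∈ Set.Icc (∑ j ∈ Finset.range n, {j | g j}.indicator (dSeqDiff a) j)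
      (∑ j ∈ Finset.range n, {j | g j}.indicator (dSeqDiff a) j + dSeq a n) := by
  have hs := hasSum_selectSum (summable_dSeqDiff ha) g
  rw [selectSum, ← hs.summable.sum_add_tsum_nat_add n]
  have htail : ∑' j, {j | g j}.indicator (dSeqDiff a) (j + n) ≤ dSeq a n :=
    hasSum_le (fun j => Set.indicator_le_self' (fun k _ => dSeqDiff_nonneg ha k) _)
      ((summable_nat_add_iff n).2 hs.summable).hasSum (hasSum_dSeqDiff ha n)
  have htail_nonneg : 0 ≤ ∑' j, {j | g j}.indicator (dSeqDiff a) (j + n) :=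
    tsum_nonneg fun j => Set.indicator_nonneg (fun k _ => dSeqDiff_nonneg ha k) _
  constructor <;> linarith

lemma cantorSet_eq_range_selectSum (ha : ∀ n, a n ∈ Set.Icc 0 1) :
    cantorSet a = Set.range (selectSum (dSeqDiff a)) := by
  ext z
  constructor
  · intro hz
    rw [← (isCompact_range (continuous_selectSum (summable_dSeqDiff ha))).isClosed.closure_eq,
      Metric.mem_closure_iff]
    intro ε hε
    obtain ⟨n, hn⟩ := ((tendsto_dSeq ha).eventually (gt_mem_nhds hε)).exists
    obtain ⟨g, hzg⟩ := mem_cantorStep_iff.1 (Set.mem_iInter.1 hz n)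
    have hg := selectSum_mem_Icc ha g n
    refine ⟨_, ⟨g, rfl⟩, ?_⟩
    rw [Real.dist_eq, abs_sub_lt_iff]
    constructor <;> linarith [hzg.1, hzg.2, hg.1, hg.2]
  · rintro ⟨g, rfl⟩
    exact Set.mem_iInter.2 fun n => mem_cantorStep_iff.2 ⟨g, selectSum_mem_Icc ha g n⟩

end CentralCantorSet

section ScaledCantorSet

variable {a x : ℕ → ℝ} {c : ℝ}

lemma tsum_tail_lt_of_eq_mul_dSeqDiff (ha : ∀ n, a n ∈ Set.Ioo 0 1) (hc : 0 < c)
    (hx : ∀ n, x (n + 1) = c * dSeqDiff a n) {n : ℕ} (hn : 1 ≤ n) :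
    ∑' j, x (n + 1 + j) < x n := by
  obtain ⟨m, rfl⟩ := Nat.exists_eq_add_of_le' hn
  have htail : ∑' j, x (m + 1 + 1 + j) = c * dSeq a (m + 1) := by
    rw [← ((hasSum_dSeqDiff (fun n => Set.Ioo_subset_Icc_self (ha n)) (m + 1)).mul_left c).tsum_eq]
    congr 1 with j
    rw [← hx, add_right_comm, add_comm j]
  rw [htail, hx, dSeqDiff]
  have hhalf := two_mul_dSeq_succ_lt ha m
  gcongr
  linarith

lemma achievementSet_eq_smul_cantorSet (ha : ∀ n, a n ∈ Set.Icc 0 1)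
    (hx : ∀ n, x (n + 1) = c * dSeqDiff a n) : achievementSet x = c • cantorSet a := by
  have hsum : Summable x :=
    (summable_nat_add_iff 1).1 (by simpa only [hx] using (summable_dSeqDiff ha).mul_left c)
  rw [achievementSet_eq_range_selectSum hsum, cantorSet_eq_range_selectSum ha,
    ← range_selectSum_const_mul]
  simp only [hx]

end ScaledCantorSet

section TwoPeriodic

variable {q : ℝ} {a : ℕ → ℝ}

lemma dSeq_of_two_periodic (hq : 0 ≤ q) (hodd : ∀ l, a (2 * l + 1) = (1 - 6 * q) / 5)
    (heven : ∀ l, a (2 * l + 2) = (2 - 7 * q) / (2 + 3 * q)) (l : ℕ) :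
    dSeq a (2 * l) = q ^ l ∧ dSeq a (2 * l + 1) = (2 + 3 * q) / 5 * q ^ l := by
  have hodd_succ : ∀ l, dSeq a (2 * l + 1) = dSeq a (2 * l) * ((2 + 3 * q) / 5) := by
    intro l
    rw [dSeq_succ, hodd]
    ring
  induction l with
  | zero =>
    have hd0 : dSeq a 0 = 1 := by simp [dSeq]
    exact ⟨hd0, by simpa [hd0] using hodd_succ 0⟩
  | succ l ih =>
    have heven_succ : dSeq a (2 * (l + 1)) = q ^ (l + 1) := by
      rw [show 2 * (l + 1) = 2 * l + 1 + 1 by ring, dSeq_succ, ih.2, heven]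
      field_simp
      ring
    exact ⟨heven_succ, by rw [hodd_succ, heven_succ]; ring⟩

lemma eq_mul_dSeqDiff_of_two_periodic {x : ℕ → ℝ} (hq : 0 ≤ q) (hq1 : q < 1)
    (hodd : ∀ l, a (2 * l + 1) = (1 - 6 * q) / 5)
    (heven : ∀ l, a (2 * l + 2) = (2 - 7 * q) / (2 + 3 * q))
    (hxodd : ∀ l, x (2 * l + 1) = 3 * q ^ l) (hxeven : ∀ l, x (2 * l + 2) = 2 * q ^ l) (n : ℕ) :
    x (n + 1) = 5 / (1 - q) * dSeqDiff a n := by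
  have hd := dSeq_of_two_periodic hq hodd heven
  have h1q : 1 - q ≠ 0 := by linarith
  obtain ⟨l, rfl | rfl⟩ := Nat.even_or_odd' n
  · rw [hxodd, dSeqDiff, (hd l).1, (hd l).2]
    field_simp
    ring
  · have hd2 : dSeq a (2 * l + 1 + 1) = q ^ (l + 1) := (hd (l + 1)).1
    rw [show 2 * l + 1 + 1 = 2 * l + 2 from rfl, hxeven, dSeqDiff, (hd l).2, hd2]
    field_simp
    ring

end TwoPeriodic

/-- For `0 < q < 1/6`, the multigeometric series `(3,2;q)` is fast convergent and its
achievement set satisfies `E(x) = (5/(1-q)) · C(a)`, where `a` is the `2`-periodic sequence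
with `a_{2n-1} = (1-6q)/5` and `a_{2n} = (2-7q)/(2+3q)`. -/
theorem achievement_multigeometric (q : ℝ) (hq0 : 0 < q) (hq : q < 1 / 6)
    (x : ℕ → ℝ) (hx : x = fun n => (if n % 2 = 1 then (3 : ℝ) else 2) * q ^ ((n - 1) / 2))
    (a : ℕ → ℝ)
    (haq : a = fun n => if n % 2 = 1 then (1 - 6 * q) / 5 else (2 - 7 * q) / (2 + 3 * q)) :
    (∀ n, 1 ≤ n → ∑' j : ℕ, x (n + 1 + j) < x n) ∧
      achievementSet x = (5 / (1 - q)) • cantorSet a := by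
  have ha : ∀ n, a n ∈ Set.Ioo 0 1 := by
    intro n
    rw [haq]
    dsimp only
    split
    · constructor <;> linarith
    · exact ⟨by apply div_pos <;> linarith, by rw [div_lt_one] <;> linarith⟩
  have hxd : ∀ n, x (n + 1) = 5 / (1 - q) * dSeqDiff a n := by
    refine eq_mul_dSeqDiff_of_two_periodic hq0.le (by linarith) ?_ ?_ ?_ ?_ <;> intro l <;>
      simp [haq, hx, Nat.add_mod, show (2 * l + 1) / 2 = l by omega]
  exact ⟨fun n => tsum_tail_lt_of_eq_mul_dSeqDiff ha (by norm_num; linarith) hxd,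
    achievementSet_eq_smul_cantorSet (fun n => Set.Ioo_subset_Icc_self (ha n)) hxd⟩
end CCS
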